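/- Under the hypotheses of the IRNN descent property (g concave increasing, ∇f L-Lipschitz, μ > L, each iterate X^{k+1} minimizing the weighted-nuclear-norm proximal subproblem), the differences satisfy Σ_{k=1}^∞ ‖Xᵏ - X^{k+1}‖_F² ≤ (2/(μ - L)) F(X¹) when F ≥ 0; in particular ‖Xᵏ - X^{k+1}‖_F → 0 as k → ∞. -/

import Mathlib

/-!
Each IRNN step decreases `F = Σᵢ g ∘ σᵢ + f` by at least `(μ - L)/2 · ‖Xᵏ⁺¹ - Xᵏ‖²`: the
supergradient inequality for `g` bounds the change of the nonsmooth part by the change of the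
weighted nuclear norm, comparing the proximal subproblem at `Xᵏ⁺¹` with its value at `Xᵏ` bounds
that change by `-(μ/2)‖Xᵏ⁺¹ - Xᵏ‖² - ⟨∇f(Xᵏ), Xᵏ⁺¹ - Xᵏ⟩`, and the descent lemma for the
`L`-smooth `f` contributes at most `⟨∇f(Xᵏ), Xᵏ⁺¹ - Xᵏ⟩ + (L/2)‖Xᵏ⁺¹ - Xᵏ‖²`. Telescoping
against `F ≥ 0` bounds the series of squared steps, whose terms therefore tend to zero.
-/

attribute [local instance] Matrix.frobeniusNormedAddCommGroup Matrix.frobeniusNormedSpace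

/-- The `i`-th singular value of a real `m × n` matrix: the square root of the `i`-th
eigenvalue of the positive semidefinite Hermitian matrix `X Xᵀ`. -/
noncomputable def sval {m n : ℕ} (X : Matrix (Fin m) (Fin n) ℝ) (i : Fin m) : ℝ :=
  Real.sqrt ((Matrix.isHermitian_mul_conjTranspose_self X).eigenvalues i)

/-- The Frobenius inner product of two matrices. -/
def finner {m n : ℕ} (X Y : Matrix (Fin m) (Fin n) ℝ) : ℝ :=
  ∑ i, ∑ j, X i j * Y i j

open Filter
open scoped InnerProductSpace

theorem image_le_add_fderiv_add_sq {E : Type*} [NormedAddCommGroup E] [NormedSpace ℝ E]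
    {f : E → ℝ} {f' : E → E →L[ℝ] ℝ} {L : ℝ} {x y : E} (hf : ∀ z, HasFDerivAt f (f' z) z)
    (hf' : ∀ z, f' z (z - x) - f' x (z - x) ≤ L * ‖z - x‖ ^ 2) :
    f y ≤ f x + f' x (y - x) + L / 2 * ‖y - x‖ ^ 2 := by
  set e := y - x
  let φ : ℝ → ℝ := fun t => f (x + t • e) - t * f' x e - L / 2 * t ^ 2 * ‖e‖ ^ 2
  have hline : ∀ t : ℝ, HasDerivAt (fun t : ℝ => x + t • e) e t := fun t => by
    simpa using ((hasDerivAt_id t).smul_const e).const_add x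
  have hφ : ∀ t, HasDerivAt φ (f' (x + t • e) e - f' x e - L * t * ‖e‖ ^ 2) t := fun t => by
    have h := (((hf _).comp_hasDerivAt t (hline t)).sub
      ((hasDerivAt_id t).mul_const (f' x e))).sub
      (((hasDerivAt_pow 2 t).const_mul (L / 2)).mul_const (‖e‖ ^ 2))
    exact h.congr_deriv (by push_cast; ring)
  have hanti : AntitoneOn φ (Set.Ici 0) := by
    refine antitoneOn_of_hasDerivWithinAt_nonpos (convex_Ici 0)
      (fun t _ => (hφ t).continuousAt.continuousWithinAt) (fun t _ => (hφ t).hasDerivWithinAt)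
      fun t ht => ?_
    rw [interior_Ici] at ht
    have h := hf' (x + t • e)
    rw [add_sub_cancel_left, map_smul, map_smul, smul_eq_mul, smul_eq_mul, norm_smul,
      Real.norm_of_nonneg (le_of_lt ht)] at h
    have hslope : t * (f' (x + t • e) e - f' x e) ≤ t * (L * t * ‖e‖ ^ 2) := by
      linear_combination h
    linarith [le_of_mul_le_mul_left hslope ht]
  have h01 := hanti Set.self_mem_Ici (zero_le_one' ℝ) zero_le_one
  simp only [φ, one_smul, zero_smul, add_zero, e, add_sub_cancel] at h01
  linarith

theorem summable_and_tsum_le_of_mul_le_sub {a F : ℕ → ℝ} {c : ℝ} (hc : 0 < c)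
    (ha : ∀ k, 0 ≤ a k) (hF : ∀ k, 0 ≤ F k) (hstep : ∀ k, c * a k ≤ F k - F (k + 1)) :
    Summable a ∧ ∑' k, a k ≤ c⁻¹ * F 0 := by
  have hpartial : ∀ N, ∑ k ∈ Finset.range N, a k ≤ c⁻¹ * F 0 := fun N => by
    have htele : c * ∑ k ∈ Finset.range N, a k ≤ F 0 - F N := by
      rw [Finset.mul_sum, ← Finset.sum_range_sub']
      exact Finset.sum_le_sum fun k _ => hstep k
    rw [← div_eq_inv_mul, le_div_iff₀' hc]
    linarith [hF N]
  have hsum := summable_of_sum_range_le ha hpartial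
  exact ⟨hsum, hsum.tsum_le_of_sum_range_le hpartial⟩

section Frobenius

variable {m n : ℕ}

/-- The Frobenius norm is by construction the norm of this `PiLp` vector, so `finner` inherits
the identities of the inner product there. -/
def frobeniusToPiLp (A : Matrix (Fin m) (Fin n) ℝ) :
    PiLp 2 (fun _ : Fin m => EuclideanSpace ℝ (Fin n)) :=
  WithLp.toLp 2 fun i => WithLp.toLp 2 (A i)

theorem norm_frobeniusToPiLp (A : Matrix (Fin m) (Fin n) ℝ) : ‖frobeniusToPiLp A‖ = ‖A‖ := rfl

theorem frobeniusToPiLp_add (A B : Matrix (Fin m) (Fin n) ℝ) :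
    frobeniusToPiLp (A + B) = frobeniusToPiLp A + frobeniusToPiLp B := rfl

theorem frobeniusToPiLp_sub (A B : Matrix (Fin m) (Fin n) ℝ) :
    frobeniusToPiLp (A - B) = frobeniusToPiLp A - frobeniusToPiLp B := rfl

theorem frobeniusToPiLp_smul (c : ℝ) (A : Matrix (Fin m) (Fin n) ℝ) :
    frobeniusToPiLp (c • A) = c • frobeniusToPiLp A := rfl

theorem finner_eq_inner (A B : Matrix (Fin m) (Fin n) ℝ) :
    finner A B = ⟪frobeniusToPiLp A, frobeniusToPiLp B⟫_ℝ := by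
  simp [finner, frobeniusToPiLp, PiLp.inner_apply, mul_comm]

theorem finner_comm (A B : Matrix (Fin m) (Fin n) ℝ) : finner A B = finner B A := by
  simp only [finner_eq_inner, real_inner_comm]

theorem finner_sub_left (A B C : Matrix (Fin m) (Fin n) ℝ) :
    finner (A - B) C = finner A C - finner B C := by
  simp only [finner_eq_inner, frobeniusToPiLp_sub, inner_sub_left]

theorem finner_smul_right (c : ℝ) (A B : Matrix (Fin m) (Fin n) ℝ) :
    finner A (c • B) = c * finner A B := by
  simp only [finner_eq_inner, frobeniusToPiLp_smul, real_inner_smul_right]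

theorem finner_le_norm_mul_norm (A B : Matrix (Fin m) (Fin n) ℝ) :
    finner A B ≤ ‖A‖ * ‖B‖ := by
  rw [finner_eq_inner]
  exact real_inner_le_norm _ _

theorem norm_add_sq_eq_finner (A B : Matrix (Fin m) (Fin n) ℝ) :
    ‖A + B‖ ^ 2 = ‖A‖ ^ 2 + 2 * finner A B + ‖B‖ ^ 2 := by
  simp only [finner_eq_inner, ← norm_frobeniusToPiLp, frobeniusToPiLp_add]
  exact norm_add_sq_real _ _

end Frobenius

section IRNN

variable {m n : ℕ}

noncomputable def irnnObjective (g : ℝ → ℝ) (f : Matrix (Fin m) (Fin n) ℝ → ℝ)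
    (Y : Matrix (Fin m) (Fin n) ℝ) : ℝ :=
  (∑ i, g (sval Y i)) + f Y

theorem irnnObjective_nonneg {g : ℝ → ℝ} {f : Matrix (Fin m) (Fin n) ℝ → ℝ}
    (hg0 : ∀ s, 0 ≤ s → 0 ≤ g s) (hf0 : ∀ X, 0 ≤ f X) (Y : Matrix (Fin m) (Fin n) ℝ) :
    0 ≤ irnnObjective g f Y :=
  add_nonneg (Finset.sum_nonneg fun _ _ => hg0 _ (Real.sqrt_nonneg _)) (hf0 Y)

theorem le_add_finner_add_sq_of_lipschitz {f : Matrix (Fin m) (Fin n) ℝ → ℝ}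
    {G : Matrix (Fin m) (Fin n) ℝ → Matrix (Fin m) (Fin n) ℝ}
    (hG : ∀ X, ∃ D : Matrix (Fin m) (Fin n) ℝ →L[ℝ] ℝ,
      (∀ H, D H = finner (G X) H) ∧ HasFDerivAt f D X)
    {L : ℝ} (hlip : ∀ X Y, ‖G X - G Y‖ ≤ L * ‖X - Y‖) (P Q : Matrix (Fin m) (Fin n) ℝ) :
    f Q ≤ f P + finner (G P) (Q - P) + L / 2 * ‖Q - P‖ ^ 2 := by
  choose D hD hfD using hG
  have hgrad : ∀ Z, D Z (Z - P) - D P (Z - P) ≤ L * ‖Z - P‖ ^ 2 := fun Z =>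
    calc D Z (Z - P) - D P (Z - P) = finner (G Z - G P) (Z - P) := by
          rw [hD, hD, finner_sub_left]
      _ ≤ ‖G Z - G P‖ * ‖Z - P‖ := finner_le_norm_mul_norm _ _
      _ ≤ L * ‖Z - P‖ * ‖Z - P‖ := by gcongr; exact hlip Z P
      _ = L * ‖Z - P‖ ^ 2 := by ring
  rw [← hD]
  exact image_le_add_fderiv_add_sq hfD hgrad

theorem add_sq_norm_sub_add_finner_le_of_prox {μ a b : ℝ} (hμ : μ ≠ 0)
    {P Q V : Matrix (Fin m) (Fin n) ℝ}
    (h : a + μ / 2 * ‖Q - (P - (1 / μ) • V)‖ ^ 2 ≤ b + μ / 2 * ‖P - (P - (1 / μ) • V)‖ ^ 2) :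
    a + μ / 2 * ‖Q - P‖ ^ 2 + finner V (Q - P) ≤ b := by
  rw [show Q - (P - (1 / μ) • V) = (Q - P) + (1 / μ) • V by abel, sub_sub_cancel,
    norm_add_sq_eq_finner, finner_smul_right, finner_comm] at h
  have hcancel : μ / 2 * (2 * (1 / μ * finner V (Q - P))) = finner V (Q - P) := by
    field_simp
  nlinarith

theorem irnnObjective_add_le {g : ℝ → ℝ} {f : Matrix (Fin m) (Fin n) ℝ → ℝ}
    {G : Matrix (Fin m) (Fin n) ℝ → Matrix (Fin m) (Fin n) ℝ}
    (hG : ∀ X, ∃ D : Matrix (Fin m) (Fin n) ℝ →L[ℝ] ℝ,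
      (∀ H, D H = finner (G X) H) ∧ HasFDerivAt f D X)
    {L μ : ℝ} (hμ : 0 < μ) (hlip : ∀ X Y, ‖G X - G Y‖ ≤ L * ‖X - Y‖)
    {P Q : Matrix (Fin m) (Fin n) ℝ} {w : Fin m → ℝ}
    (hw : ∀ i, ∀ s, 0 ≤ s → g s ≤ g (sval P i) + w i * (s - sval P i))
    (hmin : (∑ i, w i * sval Q i) + μ / 2 * ‖Q - (P - (1 / μ) • G P)‖ ^ 2 ≤
      (∑ i, w i * sval P i) + μ / 2 * ‖P - (P - (1 / μ) • G P)‖ ^ 2) :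
    irnnObjective g f Q + (μ - L) / 2 * ‖Q - P‖ ^ 2 ≤ irnnObjective g f P := by
  have hconcave : ∑ i, g (sval Q i) ≤
      (∑ i, g (sval P i)) + ((∑ i, w i * sval Q i) - ∑ i, w i * sval P i) := by
    simp only [← Finset.sum_sub_distrib, ← Finset.sum_add_distrib, ← mul_sub]
    exact Finset.sum_le_sum fun i _ => hw i _ (Real.sqrt_nonneg _)
  have hprox := add_sq_norm_sub_add_finner_le_of_prox hμ.ne' hmin
  have hsmooth := le_add_finner_add_sq_of_lipschitz hG hlip P Q
  unfold irnnObjective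
  linarith

end IRNN

theorem irnn_diff_tendsto_zero_general (m n : ℕ)
    (g : ℝ → ℝ)
    (hg0 : ∀ s, 0 ≤ s → 0 ≤ g s)
    (f : Matrix (Fin m) (Fin n) ℝ → ℝ) (hf0 : ∀ X, 0 ≤ f X)
    (G : Matrix (Fin m) (Fin n) ℝ → Matrix (Fin m) (Fin n) ℝ)
    (hG : ∀ X, ∃ D : Matrix (Fin m) (Fin n) ℝ →L[ℝ] ℝ,
      (∀ H, D H = finner (G X) H) ∧ HasFDerivAt f D X)
    (L μ : ℝ) (hL : 0 < L) (hμ : L < μ)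
    (hlip : ∀ X Y, ‖G X - G Y‖ ≤ L * ‖X - Y‖)
    (X : ℕ → Matrix (Fin m) (Fin n) ℝ) (w : ℕ → Fin m → ℝ)
    (hw : ∀ k i, ∀ s, 0 ≤ s → g s ≤ g (sval (X k) i) + w k i * (s - sval (X k) i))
    (hmin : ∀ k, ∀ Y : Matrix (Fin m) (Fin n) ℝ,
      (∑ i, w k i * sval (X (k + 1)) i) +
          μ / 2 * ‖X (k + 1) - (X k - (1 / μ) • G (X k))‖ ^ 2 ≤
        (∑ i, w k i * sval Y i) + μ / 2 * ‖Y - (X k - (1 / μ) • G (X k))‖ ^ 2) :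
    (∑' k : ℕ, ‖X (k + 1) - X (k + 2)‖ ^ 2) ≤
        2 / (μ - L) * ((∑ i, g (sval (X 1) i)) + f (X 1)) ∧
      Filter.Tendsto (fun k => ‖X k - X (k + 1)‖) Filter.atTop (nhds 0) := by
  have hstep : ∀ k, (μ - L) / 2 * ‖X (k + 1) - X (k + 2)‖ ^ 2 ≤
      irnnObjective g f (X (k + 1)) - irnnObjective g f (X (k + 2)) := fun k => by
    have := irnnObjective_add_le hG (hL.trans hμ) hlip (hw (k + 1)) (hmin (k + 1) (X (k + 1)))
    rw [norm_sub_rev]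
    linarith
  obtain ⟨hsum, htsum⟩ := summable_and_tsum_le_of_mul_le_sub (half_pos (sub_pos.2 hμ))
    (fun _ => sq_nonneg _) (fun _ => irnnObjective_nonneg hg0 hf0 _) hstep
  refine ⟨by simpa only [inv_div, irnnObjective] using htsum, ?_⟩
  rw [← tendsto_add_atTop_iff_nat 1]
  simpa [Real.sqrt_sq (norm_nonneg _)] using hsum.tendsto_atTop_zero.sqrt

/-- Summability of the successive differences of IRNN iterates: under the hypotheses of
the IRNN descent property and nonnegativity of `F`, one has
`Σ_{k=1}^∞ ‖Xᵏ - X^{k+1}‖_F² ≤ (2/(μ-L)) F(X¹)`, and in particular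
`‖Xᵏ - X^{k+1}‖_F → 0`. -/
theorem irnn_diff_tendsto_zero (m n : ℕ) (hmn : m ≤ n)
    (g : ℝ → ℝ) (hg : ConcaveOn ℝ (Set.Ici 0) g) (hmono : MonotoneOn g (Set.Ici 0))
    (hg0 : ∀ s, 0 ≤ s → 0 ≤ g s)
    (f : Matrix (Fin m) (Fin n) ℝ → ℝ) (hf0 : ∀ X, 0 ≤ f X)
    (G : Matrix (Fin m) (Fin n) ℝ → Matrix (Fin m) (Fin n) ℝ)
    (hG : ∀ X, ∃ D : Matrix (Fin m) (Fin n) ℝ →L[ℝ] ℝ,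
      (∀ H, D H = finner (G X) H) ∧ HasFDerivAt f D X)
    (L μ : ℝ) (hL : 0 < L) (hμ : L < μ)
    (hlip : ∀ X Y, ‖G X - G Y‖ ≤ L * ‖X - Y‖)
    (X : ℕ → Matrix (Fin m) (Fin n) ℝ) (w : ℕ → Fin m → ℝ)
    (hw : ∀ k i, ∀ s, 0 ≤ s → g s ≤ g (sval (X k) i) + w k i * (s - sval (X k) i))
    (hmin : ∀ k, ∀ Y : Matrix (Fin m) (Fin n) ℝ,
      (∑ i, w k i * sval (X (k + 1)) i) +
          μ / 2 * ‖X (k + 1) - (X k - (1 / μ) • G (X k))‖ ^ 2 ≤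
        (∑ i, w k i * sval Y i) + μ / 2 * ‖Y - (X k - (1 / μ) • G (X k))‖ ^ 2) :
    (∑' k : ℕ, ‖X (k + 1) - X (k + 2)‖ ^ 2) ≤
        2 / (μ - L) * ((∑ i, g (sval (X 1) i)) + f (X 1)) ∧
      Filter.Tendsto (fun k => ‖X k - X (k + 1)‖) Filter.atTop (nhds 0) :=
  irnn_diff_tendsto_zero_general m n g hg0 f hf0 G hG L μ hL hμ hlip X w hw hmin
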